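/- Let s be an irrational number, let R_s : S¹ → S¹ be the rotation R_s(z) = e^{2πis}·z, and let (Y,T) be the standard suspension of R_s. For each nonzero real number t, the time-(1/t) map T^{1/t} on (Y,T) is minimal if and only if t does not belong to ℚ + sℚ = {r₁ + s·r₂ : r₁, r₂ ∈ ℚ}. -/

import Mathlib

open Set

/-- A self-map is minimal if the only closed subsets `M` with `g '' M = M` are `∅` and `univ`. -/
def IsMinimalMap {Y : Type*} [TopologicalSpace Y] (g : Y → Y) : Prop :=
  ∀ M : Set Y, IsClosed M → g '' M = M → M = ∅ ∨ M = univ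

/-- `χ : Y → ℂ` is a (unit-circle valued) eigenvector of the flow `T` with eigenvalue `l ∈ ℝ`
if it is continuous, of modulus one, and `χ (T t y) = e^{2πi l t} * χ y`. -/
def IsEigenvector {Y : Type*} [TopologicalSpace Y] (T : ℝ → Y → Y) (l : ℝ) (χ : Y → ℂ) : Prop :=
  Continuous χ ∧ (∀ y, ‖χ y‖ = 1) ∧
    ∀ (y : Y) (t : ℝ), χ (T t y) = Complex.exp (2 * Real.pi * Complex.I * l * t) * χ y

/-- The set `Λ(Y, T)` of eigenvalues of a flow. -/
def Eigenvalues {Y : Type*} [TopologicalSpace Y] (T : ℝ → Y → Y) : Set ℝ :=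
  {l : ℝ | ∃ χ : Y → ℂ, IsEigenvector T l χ}

/-- The identification `(x, s) ∼ (Sⁿ x, s - n)` defining the standard suspension of `(X, S)`. -/
def SuspRel {X : Type*} (S : Equiv.Perm X) (p q : X × ℝ) : Prop :=
  ∃ n : ℤ, q.1 = (S ^ n) p.1 ∧ q.2 = p.2 - n

/-- The standard suspension space of `(X, S)`, with the quotient topology. -/
abbrev Susp {X : Type*} (S : Equiv.Perm X) : Type _ := Quot (SuspRel S)

/-- The suspension flow: the time-`t` map `T^t [x, s] = [x, s + t]` on the standard
suspension of `(X, S)`. -/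
def suspT {X : Type*} (S : Equiv.Perm X) (t : ℝ) : Susp S → Susp S :=
  Quot.map (fun p => (p.1, p.2 + t)) (by
    rintro ⟨x, s⟩ ⟨y, u⟩ ⟨n, h1, h2⟩
    exact ⟨n, h1, by dsimp at h2 ⊢; linarith⟩)

/-- Rotation by the angle `2πu` on the unit circle `S¹ ⊆ ℂ`, `z ↦ e^{2πiu} z`, as a permutation
of `Circle`. -/
noncomputable def rot (u : ℝ) : Equiv.Perm Circle :=
  Equiv.mulLeft (Circle.exp (2 * Real.pi * u))

/-!
Write `e(x) = e^{2πix}` (`𝐞` below). The map `[x, r] ↦ (x e(sr), e(r))` is a homeomorphism from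
the suspension of `R_s` onto the torus `S¹ × S¹`, conjugating `T^τ` to the translation by
`(e(sτ), e(τ))`. A translation of a topological group is minimal iff the cyclic group it
generates is dense, and by Kronecker's theorem `⟨(e(a), e(b))⟩` is dense in the torus iff there
is no relation `na + mb ∈ ℤ` with `(n, m) ≠ 0`. With `a = s/t`, `b = 1/t` such relations are
exactly the ways of writing `t ∈ ℚ + sℚ`, as `s` is irrational.

For Kronecker's theorem, lift the closure of `⟨(e(a), e(b))⟩` to a closed subgroup `H` of `ℝ²`
containing `ℤ²` and `(a, b)`. For irrational `b` the points `({na}, {nb})` show that `H` is not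
discrete, so it contains a line `ℝu`. Then `H` is the preimage of a subgroup of `ℝ` under
`p ↦ det (u, p)`; that subgroup is dense (and then so is `H`) or cyclic, which gives the relation.
-/

open Function Filter Topology Pointwise Real FourierTransform

theorem IsMinimalMap.of_semiconj {X Y : Type*} [TopologicalSpace X] [TopologicalSpace Y]
    {f : X → X} {g : Y → Y} (h : X ≃ₜ Y) (hfg : Semiconj h f g) (hg : IsMinimalMap g) :
    IsMinimalMap f := by
  intro M hM hfM
  have hgM : g '' (h '' M) = h '' M := by rw [← hfg.set_image, hfM]
  refine (hg _ (h.isClosedMap M hM) hgM).imp image_eq_empty.1 fun h0 => ?_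
  rw [← h.preimage_image M, h0, preimage_univ]

theorem isMinimalMap_iff_of_semiconj {X Y : Type*} [TopologicalSpace X] [TopologicalSpace Y]
    {f : X → X} {g : Y → Y} (h : X ≃ₜ Y) (hfg : Semiconj h f g) :
    IsMinimalMap f ↔ IsMinimalMap g :=
  ⟨.of_semiconj h.symm (hfg.inverse_left h.left_inv h.right_inv), .of_semiconj h hfg⟩

theorem isMinimalMap_mul_left_iff_dense_zpowers {G : Type*} [Group G] [TopologicalSpace G]
    [IsTopologicalGroup G] (g : G) :
    IsMinimalMap (g * ·) ↔ Dense (Subgroup.zpowers g : Set G) := by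
  constructor
  · intro hmin
    set K := (Subgroup.zpowers g).topologicalClosure
    have hK : (g * ·) '' (K : Set G) = K :=
      smul_coe_set (Subgroup.le_topologicalClosure _ (Subgroup.mem_zpowers g))
    rcases hmin K (Subgroup.isClosed_topologicalClosure _) hK with hK0 | hK1
    · exact absurd K.one_mem (by simp [← SetLike.mem_coe, hK0])
    · exact dense_iff_closure_eq.2 hK1
  · intro hdense M hM hgM
    refine (eq_empty_or_nonempty M).imp id fun ⟨y, hy⟩ => ?_
    have hstab : Subgroup.zpowers g ≤ MulAction.stabilizer G M := Subgroup.zpowers_le.2 hgM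
    have horbit : (· * y) '' (Subgroup.zpowers g : Set G) ⊆ M := by
      rintro _ ⟨h, hh, rfl⟩
      rw [← hstab hh]
      exact smul_mem_smul_set hy
    have : Dense ((· * y) '' (Subgroup.zpowers g : Set G)) :=
      (Homeomorph.mulRight y).isDenseEmbedding.dense_image.2 hdense
    exact eq_univ_of_univ_subset (this.closure_eq ▸ closure_minimal horbit hM)

namespace Real

theorem fourierChar_intCast (n : ℤ) : 𝐞 n = 1 := by
  rw [fourierChar_apply', Circle.exp_two_pi_mul_int]

theorem fourierChar_int_mul (n : ℤ) (x : ℝ) : 𝐞 (n * x) = 𝐞 x ^ n := by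
  rw [← zsmul_eq_mul, AddChar.map_zsmul_eq_zpow]

theorem fourierChar_eq_fourierChar_iff {x y : ℝ} : 𝐞 x = 𝐞 y ↔ ∃ m : ℤ, x = y + m := by
  simp only [fourierChar_apply', Circle.exp_eq_exp]
  refine exists_congr fun m => ?_
  rw [show 2 * π * y + m * (2 * π) = 2 * π * (y + m) by ring, mul_right_inj' (by positivity)]

theorem fourierChar_surjective : Surjective 𝐞 := fun z =>
  ⟨(z : ℂ).arg / (2 * π), by
    rw [fourierChar_apply', mul_div_cancel₀ _ (by positivity), Circle.exp_arg]⟩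

end Real

theorem rot_zpow_apply (s : ℝ) (n : ℤ) (x : Circle) : (rot s ^ n) x = 𝐞 (n * s) * x := by
  rw [rot, Equiv.zpow_mulLeft, Equiv.coe_mulLeft, fourierChar_int_mul, fourierChar_apply']

instance {X : Type*} [TopologicalSpace X] [CompactSpace X] (S : Equiv.Perm X) :
    CompactSpace (Susp S) := by
  have hcover : Quot.mk (SuspRel S) '' (univ ×ˢ Icc (0 : ℝ) 1) = univ :=
    eq_univ_of_forall <| Quot.ind fun ⟨x, r⟩ =>
      ⟨((S ^ ⌊r⌋) x, Int.fract r), ⟨trivial, Int.fract_nonneg r, (Int.fract_lt_one r).le⟩,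
        (Quot.sound ⟨⌊r⌋, rfl, rfl⟩).symm⟩
  exact ⟨hcover ▸ (isCompact_univ.prod isCompact_Icc).image continuous_quot_mk⟩

section Suspension

variable (s : ℝ)

noncomputable def suspToTorus : Susp (rot s) → Circle × Circle :=
  Quot.lift (fun p => (p.1 * 𝐞 (s * p.2), 𝐞 p.2)) <| by
    rintro ⟨x, r⟩ ⟨_, _⟩ ⟨n, rfl, rfl⟩
    ext1
    · rw [rot_zpow_apply, mul_comm _ x, mul_assoc, ← AddChar.map_add_eq_mul]
      ring_nf
    · exact fourierChar_eq_fourierChar_iff.2 ⟨n, by ring⟩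

theorem suspToTorus_mk (x : Circle) (r : ℝ) :
    suspToTorus s (Quot.mk _ (x, r)) = (x * 𝐞 (s * r), 𝐞 r) := rfl

theorem continuous_suspToTorus : Continuous (suspToTorus s) :=
  continuous_quot_lift _ (by fun_prop)

theorem suspToTorus_bijective : Bijective (suspToTorus s) := by
  refine ⟨?_, ?_⟩
  · rintro ⟨x, r⟩ ⟨x', r'⟩ h
    simp only [suspToTorus_mk, Prod.ext_iff] at h
    obtain ⟨m, rfl⟩ := fourierChar_eq_fourierChar_iff.1 h.2
    refine Quot.sound ⟨m, ?_, by simp⟩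
    rw [rot_zpow_apply]
    refine mul_right_cancel (b := 𝐞 (s * r')) (h.1 ▸ ?_)
    rw [mul_add, AddChar.map_add_eq_mul, mul_comm (m : ℝ) s]
    ac_rfl
  · rintro ⟨z, w⟩
    obtain ⟨r, rfl⟩ := fourierChar_surjective w
    exact ⟨Quot.mk _ (z * (𝐞 (s * r))⁻¹, r), by simp [suspToTorus_mk]⟩

noncomputable def suspHomeomorph : Susp (rot s) ≃ₜ Circle × Circle :=
  (continuous_suspToTorus s).homeoOfEquivCompactToT2
    (f := .ofBijective _ (suspToTorus_bijective s))

theorem semiconj_suspHomeomorph_suspT (τ : ℝ) :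
    Semiconj (suspHomeomorph s) (suspT (rot s) τ) ((𝐞 (s * τ), 𝐞 τ) * ·) := by
  rintro ⟨x, r⟩
  show suspToTorus s (Quot.mk _ (x, r + τ)) = _ * suspToTorus s (Quot.mk _ (x, r))
  simp only [suspToTorus_mk, Prod.mk_mul_mk, mul_add, AddChar.map_add_eq_mul]
  exact Prod.ext (by ac_rfl) (mul_comm _ _)

end Suspension

theorem tendsto_floor_div_mul {α : Type*} {l : Filter α} {r : α → ℝ} (hr : ∀ n, 0 < r n)
    (hr0 : Tendsto r l (𝓝 0)) (c : ℝ) : Tendsto (fun n => ⌊c / r n⌋ * r n) l (𝓝 c) := by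
  refine tendsto_of_tendsto_of_tendsto_of_le_of_le (g := fun n => c - r n)
    (by simpa using tendsto_const_nhds.sub hr0) tendsto_const_nhds (fun n => ?_) (fun n => ?_)
  · have h := Int.sub_one_lt_floor (c / r n)
    rw [sub_lt_iff_lt_add, div_lt_iff₀ (hr n)] at h
    dsimp only
    linarith
  · exact (le_div_iff₀ (hr n)).1 (Int.floor_le _)

theorem zero_mem_closure_diff_zero_of_injective {E : Type*} [NormedAddCommGroup E] [ProperSpace E]
    (H : AddSubgroup E) {p : ℕ → E} (hp : Injective p) (hpH : ∀ n, p n ∈ H)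
    (hbdd : Bornology.IsBounded (range p)) : (0 : E) ∈ closure ((H : Set E) \ {0}) := by
  obtain ⟨a, -, φ, hφ, hlim⟩ := tendsto_subseq_of_bounded hbdd fun n => mem_range_self n
  have hdiff : Tendsto (fun j => p (φ (j + 1)) - p (φ j)) atTop (𝓝 0) := by
    simpa using (hlim.comp (tendsto_add_atTop_nat 1)).sub hlim
  refine mem_closure_of_tendsto hdiff (Eventually.of_forall fun j => ?_)
  refine ⟨H.sub_mem (hpH _) (hpH _), ?_⟩
  exact sub_ne_zero.2 (hp.ne (hφ.injective.ne (Nat.succ_ne_self j)))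

theorem exists_line_subset_of_zero_mem_closure {E : Type*} [NormedAddCommGroup E] [NormedSpace ℝ E]
    [ProperSpace E] (H : AddSubgroup E) (hH : IsClosed (H : Set E))
    (h0 : (0 : E) ∈ closure ((H : Set E) \ {0})) : ∃ u ≠ (0 : E), ∀ c : ℝ, c • u ∈ H := by
  obtain ⟨h, hhH, hlim⟩ := mem_closure_iff_seq_limit.1 h0
  have hpos : ∀ n, 0 < ‖h n‖ := fun n => norm_pos_iff.2 (hhH n).2
  obtain ⟨u, hu, σ, hσmono, hσ⟩ :=
    tendsto_subseq_of_bounded (Metric.isBounded_sphere (x := (0 : E)) (r := 1))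
      (x := fun n => ‖h n‖⁻¹ • h n) fun n => by simp [norm_smul, (hpos n).ne']
  rw [Metric.isClosed_sphere.closure_eq, mem_sphere_zero_iff_norm] at hu
  refine ⟨u, norm_ne_zero_iff.1 (by simp [hu]), fun c => ?_⟩
  have hr0 : Tendsto (fun n => ‖h (σ n)‖) atTop (𝓝 0) := by
    simpa using (hlim.comp hσmono.tendsto_atTop).norm
  have hlim : Tendsto (fun n => ⌊c / ‖h (σ n)‖⌋ • h (σ n)) atTop (𝓝 (c • u)) := by
    refine ((tendsto_floor_div_mul (fun n => hpos (σ n)) hr0 c).smul hσ).congr fun n => ?_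
    simp [smul_smul, (hpos (σ n)).ne', Int.cast_smul_eq_zsmul]
  exact hH.mem_of_tendsto hlim (Eventually.of_forall fun n => H.zsmul_mem (hhH (σ n)).1 _)

theorem exists_forall_eq_int_mul_of_ker_le {E : Type*} [AddCommGroup E] [TopologicalSpace E]
    (f : E →+ ℝ) (hf : IsOpenMap f) {H : AddSubgroup E} (hker : f.ker ≤ H)
    (hH : ¬ Dense (H : Set E)) : ∃ c : ℝ, ∀ x ∈ H, ∃ n : ℤ, f x = n * c := by
  obtain hd | ⟨c, hc⟩ := AddSubgroup.dense_or_cyclic (H.map f)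
  · have hH' : (H.map f).comap f = H := by rw [AddSubgroup.comap_map_eq, sup_eq_left.2 hker]
    exact absurd (hH' ▸ hd.preimage hf) hH
  · refine ⟨c, fun x hx => ?_⟩
    obtain ⟨n, hn⟩ := AddSubgroup.mem_closure_singleton.1 (hc ▸ AddSubgroup.mem_map_of_mem f hx)
    exact ⟨n, by rw [← hn, zsmul_eq_mul]⟩

theorem exists_int_relation_of_line_subset {a b : ℝ} {H : AddSubgroup (ℝ × ℝ)}
    (hH : ¬ Dense (H : Set (ℝ × ℝ))) {u : ℝ × ℝ} (hu : u ≠ 0) (hline : ∀ c : ℝ, c • u ∈ H)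
    (h10 : ((1 : ℝ), (0 : ℝ)) ∈ H) (h01 : ((0 : ℝ), (1 : ℝ)) ∈ H) (hab : (a, b) ∈ H) :
    ∃ n m k : ℤ, (n, m) ≠ 0 ∧ n * a + m * b = k := by
  have hN : u.1 ^ 2 + u.2 ^ 2 ≠ 0 := by
    contrapose! hu
    ext <;> simp only [Prod.fst_zero, Prod.snd_zero] <;> nlinarith [sq_nonneg u.1, sq_nonneg u.2]
  let f : ℝ × ℝ →ₗ[ℝ] ℝ := u.2 • LinearMap.fst ℝ ℝ ℝ - u.1 • LinearMap.snd ℝ ℝ ℝ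
  have hf : ∀ p : ℝ × ℝ, f p = u.2 * p.1 - u.1 * p.2 := fun p => rfl
  have hsurj : Surjective f := fun y =>
    ⟨(y / (u.1 ^ 2 + u.2 ^ 2)) • (u.2, -u.1), by
      simp only [hf, Prod.smul_fst, Prod.smul_snd, smul_eq_mul]
      field_simp
      ring⟩
  have hker : f.toAddMonoidHom.ker ≤ H := by
    intro p hp
    have hp : u.2 * p.1 - u.1 * p.2 = 0 := hp
    convert hline ((u.1 * p.1 + u.2 * p.2) / (u.1 ^ 2 + u.2 ^ 2)) using 1
    ext <;> simp only [Prod.smul_fst, Prod.smul_snd, smul_eq_mul] <;>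
      rw [div_mul_eq_mul_div, eq_div_iff hN]
    · linear_combination u.2 * hp
    · linear_combination -u.1 * hp
  obtain ⟨c, hc⟩ := exists_forall_eq_int_mul_of_ker_le f.toAddMonoidHom
    (f.isOpenMap_of_finiteDimensional hsurj) hker hH
  obtain ⟨n, hn⟩ := hc _ h10
  obtain ⟨m, hm⟩ := hc _ h01
  obtain ⟨k, hk⟩ := hc _ hab
  simp only [LinearMap.toAddMonoidHom_coe, hf, mul_one, mul_zero, sub_zero, zero_sub] at hn hm hk
  have hc0 : c ≠ 0 := by
    rintro rfl
    exact hu (Prod.ext (by simpa using hm) (by simpa using hn))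
  refine ⟨n, m, k, fun hnm => hu ?_, mul_right_cancel₀ hc0 ?_⟩
  · obtain ⟨rfl, rfl⟩ := Prod.mk_eq_zero.1 hnm
    exact Prod.ext (by simpa using hm) (by simpa using hn)
  · linear_combination hk - a * hn - b * hm

theorem AddSubgroup.eq_top_of_isClosed_of_not_exists_int_relation {a b : ℝ}
    {H : AddSubgroup (ℝ × ℝ)} (hH : IsClosed (H : Set (ℝ × ℝ)))
    (h10 : ((1 : ℝ), (0 : ℝ)) ∈ H) (h01 : ((0 : ℝ), (1 : ℝ)) ∈ H)
    (hab : (a, b) ∈ H) (hrel : ¬ ∃ n m k : ℤ, (n, m) ≠ 0 ∧ n * a + m * b = k) : H = ⊤ := by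
  have hb : Irrational b := by
    rintro ⟨q, rfl⟩
    refine hrel ⟨0, q.den, q.num, by simp, ?_⟩
    simpa using (by exact_mod_cast q.den_mul_eq_num : (q.den : ℝ) * q = q.num)
  set p : ℕ → ℝ × ℝ := fun n => (Int.fract (n * a), Int.fract (n * b))
  have hpH : ∀ n, p n ∈ H := by
    intro n
    have : p n = n • (a, b) - ⌊n * a⌋ • ((1 : ℝ), (0 : ℝ)) - ⌊n * b⌋ • ((0 : ℝ), (1 : ℝ)) := by
      ext <;> simp [p, ← Int.self_sub_floor]
    exact this ▸ H.sub_mem (H.sub_mem (H.nsmul_mem hab n) (H.zsmul_mem h10 _)) (H.zsmul_mem h01 _)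
  have hinj : Injective p := by
    intro n n' hnn'
    obtain ⟨z, hz⟩ := Int.fract_eq_fract.1 (congrArg Prod.snd hnn')
    by_contra hne
    refine (hb.intCast_mul (m := n - n') (by omega)).ne_int z ?_
    push_cast
    linarith
  have hfract : ∀ x : ℝ, Int.fract x ∈ Icc (0 : ℝ) 1 := fun x =>
    ⟨Int.fract_nonneg x, (Int.fract_lt_one x).le⟩
  have hbdd : Bornology.IsBounded (range p) :=
    (isCompact_Icc.prod isCompact_Icc).isBounded.subset <|
      range_subset_iff.2 fun n => mk_mem_prod (hfract _) (hfract _)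
  obtain ⟨u, hu, hline⟩ := exists_line_subset_of_zero_mem_closure H hH
    (zero_mem_closure_diff_zero_of_injective H hinj hpH hbdd)
  have hdense : Dense (H : Set (ℝ × ℝ)) := by
    by_contra hd
    exact hrel (exists_int_relation_of_line_subset hd hu hline h10 h01 hab)
  exact AddSubgroup.coe_eq_univ.1 (hH.closure_eq ▸ hdense.closure_eq)

theorem not_dense_zpowers_fourierChar_of_int_relation {a b : ℝ} {n m k : ℤ} (hnm : (n, m) ≠ 0)
    (hrel : n * a + m * b = k) :
    ¬ Dense (Subgroup.zpowers (𝐞 a, 𝐞 b) : Set (Circle × Circle)) := by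
  intro hdense
  let χ : Circle × Circle →* Circle :=
    (zpowGroupHom n).comp (MonoidHom.fst _ _) * (zpowGroupHom m).comp (MonoidHom.snd _ _)
  have hχ : ∀ x y : ℝ, χ (𝐞 x, 𝐞 y) = 𝐞 (n * x + m * y) := by
    simp [χ, AddChar.map_add_eq_mul, fourierChar_int_mul]
  have hker : Subgroup.zpowers (𝐞 a, 𝐞 b) ≤ χ.ker :=
    Subgroup.zpowers_le.2 (by rw [MonoidHom.mem_ker, hχ, hrel, fourierChar_intCast])
  have hclosed : IsClosed (χ.ker : Set (Circle × Circle)) :=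
    isClosed_singleton.preimage ((continuous_fst.zpow n).mul (continuous_snd.zpow m))
  have hN : (0 : ℝ) < n ^ 2 + m ^ 2 := by
    have : n ≠ 0 ∨ m ≠ 0 := by
      contrapose! hnm
      simp [hnm]
    rcases this with h | h <;> positivity
  obtain ⟨x, y, hxy⟩ : ∃ x y : ℝ, n * x + m * y = 1 / 2 :=
    ⟨n / (2 * (n ^ 2 + m ^ 2)), m / (2 * (n ^ 2 + m ^ 2)), by field_simp⟩
  have hhalf : χ (𝐞 x, 𝐞 y) ≠ 1 := by
    rw [hχ, hxy, fourierChar_apply', show 2 * π * (1 / 2) = π by ring]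
    exact Circle.exp_pi_ne_one
  exact hhalf (closure_minimal hker hclosed (hdense.closure_eq ▸ mem_univ _))

theorem dense_zpowers_fourierChar_of_not_exists_int_relation {a b : ℝ}
    (hrel : ¬ ∃ n m k : ℤ, (n, m) ≠ 0 ∧ n * a + m * b = k) :
    Dense (Subgroup.zpowers (𝐞 a, 𝐞 b) : Set (Circle × Circle)) := by
  let K := (Subgroup.zpowers (𝐞 a, 𝐞 b)).topologicalClosure
  let H : AddSubgroup (ℝ × ℝ) :=
    { carrier := {p | (𝐞 p.1, 𝐞 p.2) ∈ K}
      add_mem' := fun hp hq => by simpa [AddChar.map_add_eq_mul] using K.mul_mem hp hq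
      zero_mem' := by
        show (𝐞 0, 𝐞 0) ∈ K
        rw [AddChar.map_zero_eq_one]
        exact K.one_mem
      neg_mem' := fun hp => by simpa [AddChar.map_neg_eq_inv] using K.inv_mem hp }
  have hH : IsClosed (H : Set (ℝ × ℝ)) :=
    (Subgroup.isClosed_topologicalClosure _).preimage (f := fun p : ℝ × ℝ => (𝐞 p.1, 𝐞 p.2))
      (by fun_prop)
  have h1 : 𝐞 1 = 1 := by simpa using fourierChar_intCast 1
  have hH_top := AddSubgroup.eq_top_of_isClosed_of_not_exists_int_relation hH
    (show (𝐞 1, 𝐞 0) ∈ K by rw [h1, AddChar.map_zero_eq_one]; exact K.one_mem)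
    (show (𝐞 0, 𝐞 1) ∈ K by rw [h1, AddChar.map_zero_eq_one]; exact K.one_mem)
    (Subgroup.le_topologicalClosure _ (Subgroup.mem_zpowers _)) hrel
  rw [dense_iff_closure_eq, ← Subgroup.topologicalClosure_coe]
  refine eq_univ_of_forall fun ⟨z, w⟩ => ?_
  obtain ⟨x, rfl⟩ := fourierChar_surjective z
  obtain ⟨y, rfl⟩ := fourierChar_surjective w
  exact (hH_top ▸ AddSubgroup.mem_top (x, y) : (x, y) ∈ H)

theorem dense_zpowers_fourierChar_iff (a b : ℝ) :
    Dense (Subgroup.zpowers (𝐞 a, 𝐞 b) : Set (Circle × Circle)) ↔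
      ¬ ∃ n m k : ℤ, (n, m) ≠ 0 ∧ n * a + m * b = k :=
  ⟨fun hdense ⟨_, _, _, hnm, hrel⟩ => not_dense_zpowers_fourierChar_of_int_relation hnm hrel hdense,
    dense_zpowers_fourierChar_of_not_exists_int_relation⟩

theorem exists_int_relation_iff_exists_rat {s t : ℝ} (hs : Irrational s) (ht : t ≠ 0) :
    (∃ n m k : ℤ, (n, m) ≠ 0 ∧ n * (s * (1 / t)) + m * (1 / t) = k) ↔
      ∃ r₁ r₂ : ℚ, t = r₁ + s * r₂ := by
  have hdiv : ∀ n m k : ℝ, n * (s * (1 / t)) + m * (1 / t) = k ↔ n * s + m = k * t := by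
    intro n m k
    field_simp
  simp_rw [hdiv]
  constructor
  · rintro ⟨n, m, k, hnm, hrel⟩
    have hk : k ≠ 0 := by
      rintro rfl
      obtain rfl : n = 0 := by
        by_contra hn
        exact (hs.intCast_mul hn).ne_int (-m) (by push_cast at hrel ⊢; linarith)
      exact hnm (by simp_all)
    refine ⟨m / k, n / k, ?_⟩
    push_cast
    field_simp
    linear_combination -hrel
  · rintro ⟨r₁, r₂, rfl⟩
    refine ⟨r₂.num * r₁.den, r₁.num * r₂.den, r₁.den * r₂.den, fun h0 => ht ?_, ?_⟩
    · obtain ⟨h2, h1⟩ := Prod.mk_eq_zero.1 h0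
      simp_all
    · have hden₁ : (r₁.den : ℝ) ≠ 0 := by positivity
      have hden₂ : (r₂.den : ℝ) ≠ 0 := by positivity
      rw [Rat.cast_def r₁, Rat.cast_def r₂]
      push_cast
      field_simp
      ring

/-- Let `s` be irrational and `(Y, T)` the standard suspension of the rotation
`R_s`. For each nonzero real `t`, the time-`1/t` map on `(Y, T)` is minimal iff
`t ∉ ℚ + sℚ`. -/
theorem time_map_minimal_iff_not_mem_rat_span (s : ℝ) (hs : Irrational s)
    (t : ℝ) (ht : t ≠ 0) :
    IsMinimalMap (suspT (rot s) (1 / t)) ↔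
      ¬ ∃ r₁ r₂ : ℚ, t = (r₁ : ℝ) + s * (r₂ : ℝ) := by
  rw [isMinimalMap_iff_of_semiconj _ (semiconj_suspHomeomorph_suspT s (1 / t)),
    isMinimalMap_mul_left_iff_dense_zpowers, dense_zpowers_fourierChar_iff,
    exists_int_relation_iff_exists_rat hs ht]
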